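/- Let R be of type E_7, set v_4 := s_1 s_3 s_4 s_5 s_2 s_4 s_3 s_6 s_5 s_4 s_1 s_2 s_3 s_7 s_6 s_5 s_4, and for i ≠ 7 define w_i := w_{0, S∖{α_1, α_i}} w_{0, S∖{α_1}} v_4 (so w_1 = v_4). Then for each i ∈ {1, …, 6}: w_i^{-1}(α_j) is a positive root for every simple root α_j with j ≠ i, and w_i^{-1}(α_i) is a negative root. -/

import Mathlib

/-!
The longest element `w_{0,J}` of a parabolic subgroup `W_J` is the unique element of `W_J`
sending every simple root indexed by `J` to a negative root. A longest element has this
property by the exchange argument (otherwise `w_{0,J} s_j` would be longer). Conversely, such an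
element maps the positive roots of `R_J` into, hence onto, the negative ones, so
two of them differ by an element of `W_J` sending the simple roots of `J` to positive roots,
which is the identity, again by the exchange argument.

Hence every `w_{0,J}` in the statement is the product of an explicit reduced word, and
`w_i⁻¹ α_j` is given by an explicit word applied to `α_j`. Its coordinates with respect to the
simple roots are integers computed from the Cartan matrix of `E_7`, and their signs are checked
by evaluation.
-/

noncomputable section

open scoped Classical

local notation "⟪" x ", " y "⟫" => @inner ℝ _ _ x y

namespace PaperFormal

variable (V : Type*) [NormedAddCommGroup V] [InnerProductSpace ℝ V] [FiniteDimensional ℝ V]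

/-- The reflection of the Euclidean space `V` in the hyperplane orthogonal to `v`,
i.e. `β ↦ β - (2⟪β,v⟫/⟪v,v⟫) v`. -/
def sref (v : V) : V ≃ₗᵢ[ℝ] V := Submodule.reflection (ℝ ∙ v)ᗮ

/-- A reduced irreducible crystallographic root system `R` in the Euclidean space `V`,
together with a fixed base of simple roots `a 1, …, a n`. -/
structure RootSystemWithBase (n : ℕ) : Type _ where
  /-- the set of roots -/
  R : Set V
  /-- the simple roots `a 1, …, a n` (values outside `{1, …, n}` are irrelevant) -/
  a : ℕ → V
  finite : R.Finite
  ne_zero : ∀ β ∈ R, β ≠ 0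
  refl_mem : ∀ α ∈ R, ∀ β ∈ R, sref V α β ∈ R
  crystallographic : ∀ α ∈ R, ∀ β ∈ R, ∃ k : ℤ, 2 * ⟪β, α⟫ / ⟪α, α⟫ = (k : ℝ)
  reduced : ∀ α ∈ R, ∀ t : ℝ, t • α ∈ R → t = 1 ∨ t = -1
  irreducible : ∀ P : Set V, (∀ x ∈ R, ∀ y ∈ R, x ∈ P → ⟪x, y⟫ ≠ 0 → y ∈ P) →
      (R ∩ P).Nonempty → R ⊆ P
  simple_mem : ∀ i ∈ Finset.Icc 1 n, a i ∈ R
  indep : LinearIndependent ℝ (fun i : (Set.Icc 1 n : Set ℕ) => a i)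
  span_top : Submodule.span ℝ (a '' Set.Icc 1 n) = ⊤
  root_combo : ∀ β ∈ R, ∃ c : ℕ → ℤ, ((∀ i, 0 ≤ c i) ∨ (∀ i, c i ≤ 0)) ∧
      β = ∑ i ∈ Finset.Icc 1 n, (c i : ℝ) • a i

namespace RootSystemWithBase

variable {V} {n : ℕ} (S : RootSystemWithBase V n)

/-- The simple reflection `s i` associated to the simple root `a i`. -/
def s (i : ℕ) : V ≃ₗᵢ[ℝ] V := sref V (S.a i)

/-- The product of the simple reflections along a list of indices
(leftmost factor acting last). -/
def prodW (l : List ℕ) : V ≃ₗᵢ[ℝ] V := (l.map S.s).prod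

/-- The parabolic subgroup `W_J` of the Weyl group generated by the simple reflections
`s i` for `i ∈ J`. -/
def WJ (J : Set ℕ) : Subgroup (V ≃ₗᵢ[ℝ] V) :=
  Subgroup.closure (S.s '' (J ∩ Set.Icc 1 n))

/-- The Weyl group `W`, generated by all simple reflections. -/
def W : Subgroup (V ≃ₗᵢ[ℝ] V) := S.WJ Set.univ

/-- The length of `w` with respect to the simple reflections indexed by `J`:
the least length of a word in these reflections expressing `w`. -/
def lenJ (J : Set ℕ) (w : V ≃ₗᵢ[ℝ] V) : ℕ :=
  sInf {k | ∃ l : List ℕ, (∀ i ∈ l, i ∈ J ∩ Set.Icc 1 n) ∧ l.length = k ∧ w = S.prodW l}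

/-- The length function `ℓ` of the Weyl group. -/
def len (w : V ≃ₗᵢ[ℝ] V) : ℕ := S.lenJ Set.univ w

/-- `w` is the longest element `w_{0,J}` of the parabolic subgroup `W_J`. -/
def IsLongest (J : Set ℕ) (w : V ≃ₗᵢ[ℝ] V) : Prop :=
  w ∈ S.WJ J ∧ ∀ x ∈ S.WJ J, S.lenJ J x ≤ S.lenJ J w

/-- `β` is a positive root (with respect to the base `a`). -/
def IsPos (β : V) : Prop :=
  β ∈ S.R ∧ ∃ c : ℕ → ℝ, (∀ i, 0 ≤ c i) ∧ β = ∑ i ∈ Finset.Icc 1 n, c i • S.a i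

/-- `β` is a negative root. -/
def IsNeg (β : V) : Prop := S.IsPos (-β)

/-- `h` is the highest root `α_0`: a root such that `h - β` is a nonnegative combination of
the simple roots for every root `β`. -/
def IsHighest (h : V) : Prop :=
  h ∈ S.R ∧ ∀ β ∈ S.R, ∃ c : ℕ → ℝ, (∀ i, 0 ≤ c i) ∧
    h - β = ∑ i ∈ Finset.Icc 1 n, c i • S.a i

/-- The root system is simply laced: all roots have the same length. -/
def SimplyLaced : Prop := ∀ α ∈ S.R, ∀ β ∈ S.R, ⟪α, α⟫ = ⟪β, β⟫

/-- `ω` is the fundamental weight `ω_r` dual to the simple root `a r`: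
`⟨ω, a j⟩ = δ_{rj}` for `1 ≤ j ≤ n`. -/
def IsFundamental (r : ℕ) (ω : V) : Prop :=
  ∀ j ∈ Finset.Icc 1 n, 2 * ⟪ω, S.a j⟫ / ⟪S.a j, S.a j⟫ = if j = r then 1 else 0

/-- A weight `ω` is minuscule: `⟨ω, β⟩ ≤ 1` for every positive root `β`. -/
def Minuscule (ω : V) : Prop := ∀ β, S.IsPos β → 2 * ⟪ω, β⟫ / ⟪β, β⟫ ≤ 1

end RootSystemWithBase

variable {V}

/-- Adjacency in the Dynkin diagram of type `E_n` (`n = 6, 7, 8`, Bourbaki labeling):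
`α_2` is the branch node attached to `α_4`; `α_1, α_3, α_4, …, α_n` form a chain. -/
def adjE (i j : ℕ) : Prop :=
  (i, j) ∈ ([(1,3),(3,4),(2,4),(4,5),(5,6),(6,7),(7,8)] : List (ℕ × ℕ)) ∨
  (j, i) ∈ ([(1,3),(3,4),(2,4),(4,5),(5,6),(6,7),(7,8)] : List (ℕ × ℕ))

/-- The element `v_4 = s_1 s_3 s_4 s_5 s_2 s_4 s_3 s_6 s_5 s_4 s_1 s_2 s_3 s_7 s_6 s_5 s_4`
of the Weyl group of `E_7`. -/
def v4E7 (S : RootSystemWithBase V 7) : V ≃ₗᵢ[ℝ] V :=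
  S.prodW [1, 3, 4, 5, 2, 4, 3, 6, 5, 4, 1, 2, 3, 7, 6, 5, 4]

end PaperFormal

namespace PaperFormal

variable {V : Type*} [NormedAddCommGroup V] [InnerProductSpace ℝ V]

theorem sref_apply (v x : V) : sref V v x = x - (2 * ⟪x, v⟫ / ⟪v, v⟫) • v := by
  rw [sref, Submodule.reflection_orthogonal_apply, Submodule.reflection_singleton_apply,
    real_inner_self_eq_norm_sq, real_inner_comm]
  simp only [RCLike.ofReal_real_eq_id, id_eq]
  match_scalars <;> ring

theorem sref_mul_self (v : V) : sref V v * sref V v = 1 := Submodule.reflection_mul_reflection _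

theorem sref_apply_self (v : V) : sref V v v = -v :=
  Submodule.reflection_orthogonalComplement_singleton_eq_neg v

theorem mul_sref_mul_inv (f : V ≃ₗᵢ[ℝ] V) (v : V) : f * sref V v * f⁻¹ = sref V (f v) := by
  ext x
  have hinner : ⟪f.symm x, v⟫ = ⟪x, f v⟫ := by
    rw [← f.inner_map_map, f.apply_symm_apply]
  have hinv : (f⁻¹ : V ≃ₗᵢ[ℝ] V) x = f.symm x := rfl
  simp only [LinearIsometryEquiv.coe_mul, Function.comp_apply, hinv, sref_apply, map_sub,
    map_smul, hinner, f.inner_map_map, f.apply_symm_apply]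

namespace RootSystemWithBase

variable {n : ℕ} (S : RootSystemWithBase V n)

/-! ### Coordinates with respect to the simple roots -/

def basis : Module.Basis (Set.Icc 1 n) ℝ V :=
  .mk S.indep (by rw [← Set.image_eq_range, S.span_top])

theorem basis_apply (k : Set.Icc 1 n) : S.basis k = S.a k := Module.Basis.mk_apply _ _ _

def coord (k : ℕ) : V →ₗ[ℝ] ℝ :=
  if hk : k ∈ Set.Icc 1 n then S.basis.coord ⟨k, hk⟩ else 0

theorem coord_of_notMem {k : ℕ} (hk : k ∉ Finset.Icc 1 n) (β : V) : S.coord k β = 0 := by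
  rw [coord, dif_neg (by simpa using hk), LinearMap.zero_apply]

theorem coord_a {j : ℕ} (hj : j ∈ Finset.Icc 1 n) (k : ℕ) :
    S.coord k (S.a j) = if k = j then 1 else 0 := by
  by_cases hk : k ∈ Finset.Icc 1 n
  · have hj' : j ∈ Set.Icc 1 n := by simpa using hj
    rw [coord, dif_pos (by simpa using hk), ← S.basis_apply ⟨j, hj'⟩, Module.Basis.coord_apply,
      Module.Basis.repr_self, Finsupp.single_apply]
    simp only [Subtype.mk.injEq, eq_comm]
  · rw [S.coord_of_notMem hk, if_neg (by rintro rfl; exact hk hj)]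

theorem sum_coord_smul (β : V) : ∑ k ∈ Finset.Icc 1 n, S.coord k β • S.a k = β := by
  rw [Finset.sum_subtype (p := (· ∈ Set.Icc 1 n)) _ (by simp)]
  conv_rhs => rw [← S.basis.sum_repr β]
  refine Finset.sum_congr rfl fun k _ => ?_
  rw [coord, dif_pos k.2, Module.Basis.coord_apply, S.basis_apply]

theorem coord_sum_smul (c : ℕ → ℝ) {k : ℕ} (hk : k ∈ Finset.Icc 1 n) :
    S.coord k (∑ i ∈ Finset.Icc 1 n, c i • S.a i) = c k := by
  simp_rw [map_sum, map_smul, smul_eq_mul]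
  rw [Finset.sum_congr rfl fun i hi => by rw [S.coord_a hi, mul_ite, mul_one, mul_zero],
    Finset.sum_ite_eq, if_pos hk]

theorem eq_zero_of_coord_eq_zero {β : V} (h : ∀ k ∈ Finset.Icc 1 n, S.coord k β = 0) : β = 0 := by
  rw [← S.sum_coord_smul β]
  exact Finset.sum_eq_zero fun k hk => by rw [h k hk, zero_smul]

theorem neg_mem {β : V} (hβ : β ∈ S.R) : -β ∈ S.R := by
  simpa [sref_apply_self] using S.refl_mem β hβ β hβ

theorem isPos_iff {β : V} : S.IsPos β ↔ β ∈ S.R ∧ ∀ k, 0 ≤ S.coord k β := by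
  refine ⟨fun ⟨hβ, c, hc, hsum⟩ => ⟨hβ, fun k => ?_⟩,
    fun ⟨hβ, hc⟩ => ⟨hβ, fun k => S.coord k β, hc, (S.sum_coord_smul β).symm⟩⟩
  by_cases hk : k ∈ Finset.Icc 1 n
  · rw [hsum, S.coord_sum_smul c hk]
    exact hc k
  · rw [S.coord_of_notMem hk]

theorem isNeg_iff {β : V} : S.IsNeg β ↔ β ∈ S.R ∧ ∀ k, S.coord k β ≤ 0 := by
  rw [IsNeg, isPos_iff]
  simp only [map_neg, neg_nonneg]
  exact and_congr_left' ⟨fun h => neg_neg β ▸ S.neg_mem h, S.neg_mem⟩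

theorem isNeg_neg {β : V} : S.IsNeg (-β) ↔ S.IsPos β := by
  rw [IsNeg, neg_neg]

theorem isPos_or_isNeg {β : V} (hβ : β ∈ S.R) : S.IsPos β ∨ S.IsNeg β := by
  obtain ⟨c, hsign, hsum⟩ := S.root_combo β hβ
  have hcoord : ∀ k ∈ Finset.Icc 1 n, S.coord k β = c k := fun k hk => by
    rw [hsum, S.coord_sum_smul _ hk]
  rw [isPos_iff, isNeg_iff]
  refine hsign.imp (fun hc => ⟨hβ, fun k => ?_⟩) (fun hc => ⟨hβ, fun k => ?_⟩) <;>
    by_cases hk : k ∈ Finset.Icc 1 n <;> simp [hcoord k, S.coord_of_notMem, hk, hc k]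

theorem IsPos.not_isNeg {β : V} (hpos : S.IsPos β) : ¬S.IsNeg β := fun hneg => by
  rw [isPos_iff] at hpos
  rw [isNeg_iff] at hneg
  exact S.ne_zero β hpos.1 <| S.eq_zero_of_coord_eq_zero fun k _ =>
    le_antisymm (hneg.2 k) (hpos.2 k)

theorem isPos_a {j : ℕ} (hj : j ∈ Finset.Icc 1 n) : S.IsPos (S.a j) := by
  refine S.isPos_iff.mpr ⟨S.simple_mem j hj, fun k => ?_⟩
  rw [S.coord_a hj]
  split_ifs <;> norm_num

theorem s_apply (i : ℕ) (x : V) :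
    S.s i x = x - (2 * ⟪x, S.a i⟫ / ⟪S.a i, S.a i⟫) • S.a i := sref_apply _ _

theorem s_mul_self (i : ℕ) : S.s i * S.s i = 1 := sref_mul_self _

theorem s_inv (i : ℕ) : (S.s i)⁻¹ = S.s i := inv_eq_of_mul_eq_one_right (S.s_mul_self i)

theorem mul_s_apply_a (w : V ≃ₗᵢ[ℝ] V) (i : ℕ) : (w * S.s i) (S.a i) = -w (S.a i) := by
  rw [LinearIsometryEquiv.coe_mul, Function.comp_apply, s, sref_apply_self, map_neg]

theorem coord_s {i : ℕ} (hi : i ∈ Finset.Icc 1 n) (β : V) (k : ℕ) :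
    S.coord k (S.s i β) =
      S.coord k β - 2 * ⟪β, S.a i⟫ / ⟪S.a i, S.a i⟫ * if k = i then 1 else 0 := by
  rw [s_apply, map_sub, map_smul, S.coord_a hi, smul_eq_mul]

theorem coord_s_of_ne {i k : ℕ} (hi : i ∈ Finset.Icc 1 n) (hki : k ≠ i) (β : V) :
    S.coord k (S.s i β) = S.coord k β := by
  rw [S.coord_s hi, if_neg hki, mul_zero, sub_zero]

theorem prodW_nil : S.prodW [] = 1 := rfl

theorem prodW_cons (i : ℕ) (l : List ℕ) : S.prodW (i :: l) = S.s i * S.prodW l := by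
  simp [prodW]

theorem prodW_append (l₁ l₂ : List ℕ) : S.prodW (l₁ ++ l₂) = S.prodW l₁ * S.prodW l₂ := by
  simp [prodW]

theorem prodW_inv (l : List ℕ) : (S.prodW l)⁻¹ = S.prodW l.reverse := by
  induction l with
  | nil => rfl
  | cons i l ih =>
    rw [prodW_cons, mul_inv_rev, ih, s_inv, List.reverse_cons, prodW_append, prodW_cons,
      prodW_nil, mul_one]

theorem prodW_apply_mem_R {l : List ℕ} (hl : ∀ k ∈ l, k ∈ Set.Icc 1 n) {β : V}
    (hβ : β ∈ S.R) : S.prodW l β ∈ S.R := by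
  induction l with
  | nil => exact hβ
  | cons i l ih =>
    rw [List.forall_mem_cons] at hl
    rw [prodW_cons, LinearIsometryEquiv.coe_mul, Function.comp_apply]
    exact S.refl_mem _ (S.simple_mem i (by simpa using hl.1)) _ (ih hl.2)

theorem prodW_mem_WJ {J : Set ℕ} {l : List ℕ} (hl : ∀ k ∈ l, k ∈ J ∩ Set.Icc 1 n) :
    S.prodW l ∈ S.WJ J := by
  induction l with
  | nil => exact (S.WJ J).one_mem
  | cons i l ih =>
    rw [List.forall_mem_cons] at hl
    rw [prodW_cons]
    exact mul_mem (Subgroup.subset_closure ⟨i, hl.1, rfl⟩) (ih hl.2)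

theorem exists_prodW_of_mem_WJ {J : Set ℕ} {w : V ≃ₗᵢ[ℝ] V} (hw : w ∈ S.WJ J) :
    ∃ l : List ℕ, (∀ k ∈ l, k ∈ J ∩ Set.Icc 1 n) ∧ w = S.prodW l := by
  induction hw using Subgroup.closure_induction with
  | mem x hx =>
    obtain ⟨i, hi, rfl⟩ := hx
    exact ⟨[i], by simpa using hi, by simp [prodW]⟩
  | one => exact ⟨[], by simp, rfl⟩
  | mul x y _ _ hx hy =>
    obtain ⟨l₁, hl₁, rfl⟩ := hx
    obtain ⟨l₂, hl₂, rfl⟩ := hy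
    exact ⟨l₁ ++ l₂, fun k hk => (List.mem_append.mp hk).elim (hl₁ k) (hl₂ k),
      (S.prodW_append l₁ l₂).symm⟩
  | inv x _ hx =>
    obtain ⟨l, hl, rfl⟩ := hx
    exact ⟨l.reverse, fun k hk => hl k (List.mem_reverse.mp hk), S.prodW_inv l⟩

theorem apply_mem_R_of_mem_WJ {J : Set ℕ} {w : V ≃ₗᵢ[ℝ] V} (hw : w ∈ S.WJ J) {β : V}
    (hβ : β ∈ S.R) : w β ∈ S.R := by
  obtain ⟨l, hl, rfl⟩ := S.exists_prodW_of_mem_WJ hw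
  exact S.prodW_apply_mem_R (fun k hk => (hl k hk).2) hβ

theorem coord_apply_of_mem_WJ {J : Set ℕ} {w : V ≃ₗᵢ[ℝ] V} (hw : w ∈ S.WJ J) {k : ℕ}
    (hk : k ∉ J) (β : V) : S.coord k (w β) = S.coord k β := by
  obtain ⟨l, hl, rfl⟩ := S.exists_prodW_of_mem_WJ hw
  clear hw
  induction l with
  | nil => rfl
  | cons i l ih =>
    rw [List.forall_mem_cons] at hl
    rw [prodW_cons, LinearIsometryEquiv.coe_mul, Function.comp_apply,
      S.coord_s_of_ne (by simpa using hl.1.2) (by rintro rfl; exact hk hl.1.1), ih hl.2]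

/-! ### The exchange argument -/

theorem eq_a_of_isPos_of_isNeg_s {j : ℕ} (hj : j ∈ Finset.Icc 1 n) {β : V}
    (hpos : S.IsPos β) (hneg : S.IsNeg (S.s j β)) : β = S.a j := by
  rw [isPos_iff] at hpos
  rw [isNeg_iff] at hneg
  have hzero : ∀ k ∈ Finset.Icc 1 n, k ≠ j → S.coord k β = 0 := fun k _ hkj =>
    le_antisymm (S.coord_s_of_ne hj hkj β ▸ hneg.2 k) (hpos.2 k)
  have hβ : β = S.coord j β • S.a j := by
    conv_lhs => rw [← S.sum_coord_smul β]
    exact Finset.sum_eq_single_of_mem j hj fun k hk hkj => by rw [hzero k hk hkj, zero_smul]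
  rcases S.reduced _ (S.simple_mem j hj) _ (hβ ▸ hpos.1) with h | h
  · rw [hβ, h, one_smul]
  · linarith [hpos.2 j]

theorem exists_shorter_prodW_mul_s {J : Set ℕ} {i : ℕ} (hi : i ∈ J ∩ Set.Icc 1 n) :
    ∀ l : List ℕ, (∀ k ∈ l, k ∈ J ∩ Set.Icc 1 n) → S.IsNeg (S.prodW l (S.a i)) →
      ∃ l' : List ℕ, (∀ k ∈ l', k ∈ J ∩ Set.Icc 1 n) ∧ l'.length + 1 = l.length ∧
        S.prodW l * S.s i = S.prodW l'
  | [], _, hneg => absurd hneg (S.isPos_a (by simpa using hi.2)).not_isNeg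
  | j :: l, hl, hneg => by
    rw [List.forall_mem_cons] at hl
    have happ : S.prodW (j :: l) (S.a i) = S.s j (S.prodW l (S.a i)) := by
      rw [prodW_cons]; rfl
    rcases S.isPos_or_isNeg (S.prodW_apply_mem_R (fun k hk => (hl.2 k hk).2)
      (S.simple_mem i (by simpa using hi.2))) with hpos | hneg'
    · have heq := S.eq_a_of_isPos_of_isNeg_s (by simpa using hl.1.2) hpos (happ ▸ hneg)
      have hconj : S.prodW l * S.s i * (S.prodW l)⁻¹ = S.s j := by
        rw [s, mul_sref_mul_inv, heq, s]
      have hswap : S.prodW l * S.s i = S.s j * S.prodW l := by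
        rw [← hconj, inv_mul_cancel_right]
      refine ⟨l, hl.2, rfl, ?_⟩
      rw [prodW_cons, mul_assoc, hswap, ← mul_assoc, s_mul_self, one_mul]
    · obtain ⟨l', hl', hlen, heq⟩ := exists_shorter_prodW_mul_s hi l hl.2 hneg'
      refine ⟨j :: l', List.forall_mem_cons.mpr ⟨hl.1, hl'⟩, by simp [hlen], ?_⟩
      rw [prodW_cons, mul_assoc, heq, prodW_cons]

theorem lenJ_le {J : Set ℕ} {l : List ℕ} (hl : ∀ k ∈ l, k ∈ J ∩ Set.Icc 1 n) :
    S.lenJ J (S.prodW l) ≤ l.length :=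
  Nat.sInf_le ⟨l, hl, rfl, rfl⟩

theorem exists_prodW_length_eq_lenJ {J : Set ℕ} {w : V ≃ₗᵢ[ℝ] V} (hw : w ∈ S.WJ J) :
    ∃ l : List ℕ, (∀ k ∈ l, k ∈ J ∩ Set.Icc 1 n) ∧ l.length = S.lenJ J w ∧ w = S.prodW l := by
  obtain ⟨l, hl, hwl⟩ := S.exists_prodW_of_mem_WJ hw
  have hne : {k | ∃ l : List ℕ, (∀ i ∈ l, i ∈ J ∩ Set.Icc 1 n) ∧ l.length = k ∧
      w = S.prodW l}.Nonempty := ⟨l.length, l, hl, rfl, hwl⟩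
  exact Nat.sInf_mem hne

theorem lenJ_mul_s_lt {J : Set ℕ} {w : V ≃ₗᵢ[ℝ] V} (hw : w ∈ S.WJ J) {i : ℕ}
    (hi : i ∈ J ∩ Set.Icc 1 n) (hneg : S.IsNeg (w (S.a i))) :
    S.lenJ J (w * S.s i) < S.lenJ J w := by
  obtain ⟨l, hl, hlen, rfl⟩ := S.exists_prodW_length_eq_lenJ hw
  obtain ⟨l', hl', hlen', heq⟩ := S.exists_shorter_prodW_mul_s hi l hl hneg
  have := S.lenJ_le hl'
  rw [← heq] at this
  omega

theorem isNeg_apply_a_of_isLongest {J : Set ℕ} {w : V ≃ₗᵢ[ℝ] V} (hw : S.IsLongest J w) {i : ℕ}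
    (hi : i ∈ J ∩ Set.Icc 1 n) : S.IsNeg (w (S.a i)) := by
  refine (S.isPos_or_isNeg (S.apply_mem_R_of_mem_WJ hw.1
    (S.simple_mem i (by simpa using hi.2)))).resolve_left fun hpos => ?_
  have hws : w * S.s i ∈ S.WJ J := mul_mem hw.1 (Subgroup.subset_closure ⟨i, hi, rfl⟩)
  have hlt := S.lenJ_mul_s_lt hws hi (by rwa [mul_s_apply_a, isNeg_neg])
  rw [mul_assoc, s_mul_self, mul_one] at hlt
  exact absurd (hw.2 _ hws) (not_le.mpr hlt)

theorem eq_one_of_isPos_apply_a {J : Set ℕ} {w : V ≃ₗᵢ[ℝ] V} (hw : w ∈ S.WJ J)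
    (hpos : ∀ i ∈ J ∩ Set.Icc 1 n, S.IsPos (w (S.a i))) : w = 1 := by
  obtain ⟨l, hl, hlen, rfl⟩ := S.exists_prodW_length_eq_lenJ hw
  rcases List.eq_nil_or_concat l with rfl | ⟨l', i, rfl⟩
  · rfl
  rw [List.concat_eq_append] at hl hlen hpos ⊢
  have hi : i ∈ J ∩ Set.Icc 1 n := hl i (by simp)
  have hl' : ∀ k ∈ l', k ∈ J ∩ Set.Icc 1 n := fun k hk => hl k (by simp [hk])
  have happend : S.prodW l' * S.s i = S.prodW (l' ++ [i]) := by
    rw [prodW_append, prodW_cons, prodW_nil, mul_one]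
  have hdrop : S.prodW (l' ++ [i]) * S.s i = S.prodW l' := by
    rw [← happend, mul_assoc, s_mul_self, mul_one]
  have hlt := S.lenJ_mul_s_lt (S.prodW_mem_WJ hl') hi
    (by rw [← hdrop, mul_s_apply_a, isNeg_neg]; exact hpos i hi)
  rw [happend, ← hlen, List.length_append, List.length_singleton] at hlt
  exact absurd (S.lenJ_le hl') (by omega)

/-! ### Longest elements of parabolic subgroups -/

def parabolicPosRoots (J : Set ℕ) : Set V := {β | S.IsPos β ∧ ∀ k ∉ J, S.coord k β = 0}

theorem a_mem_parabolicPosRoots {J : Set ℕ} {i : ℕ} (hi : i ∈ J ∩ Set.Icc 1 n) :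
    S.a i ∈ S.parabolicPosRoots J := by
  have hi' : i ∈ Finset.Icc 1 n := by simpa using hi.2
  refine ⟨S.isPos_a hi', fun k hk => ?_⟩
  rw [S.coord_a hi', if_neg (by rintro rfl; exact hk hi.1)]

theorem neg_apply_mem_parabolicPosRoots {J : Set ℕ} {w : V ≃ₗᵢ[ℝ] V} (hw : w ∈ S.WJ J)
    (hneg : ∀ i ∈ J ∩ Set.Icc 1 n, S.IsNeg (w (S.a i))) {β : V}
    (hβ : β ∈ S.parabolicPosRoots J) : -w β ∈ S.parabolicPosRoots J := by
  obtain ⟨hpos, hβJ⟩ := hβ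
  rw [isPos_iff] at hpos
  refine ⟨S.isNeg_iff.mpr ⟨S.apply_mem_R_of_mem_WJ hw hpos.1, fun m => ?_⟩, fun k hk => ?_⟩
  · -- `w β` is a nonnegative combination of the negative roots `w (a k)`, `k ∈ J`
    rw [← S.sum_coord_smul β]
    simp only [map_sum, map_smul, smul_eq_mul]
    refine Finset.sum_nonpos fun k hk => ?_
    by_cases hkJ : k ∈ J
    · exact mul_nonpos_of_nonneg_of_nonpos (hpos.2 k)
        ((S.isNeg_iff.mp (hneg k ⟨hkJ, by simpa using hk⟩)).2 m)
    · rw [hβJ k hkJ, zero_mul]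
  · rw [map_neg, S.coord_apply_of_mem_WJ hw hk, hβJ k hk, neg_zero]

open Pointwise in
theorem image_parabolicPosRoots {J : Set ℕ} {w : V ≃ₗᵢ[ℝ] V} (hw : w ∈ S.WJ J)
    (hneg : ∀ i ∈ J ∩ Set.Icc 1 n, S.IsNeg (w (S.a i))) :
    w '' S.parabolicPosRoots J = -S.parabolicPosRoots J := by
  have hfin : (S.parabolicPosRoots J).Finite := S.finite.subset fun β hβ => hβ.1.1
  refine Set.eq_of_subset_of_ncard_le ?_ ?_ hfin.neg
  · rintro _ ⟨β, hβ, rfl⟩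
    exact Set.mem_neg.mpr (S.neg_apply_mem_parabolicPosRoots hw hneg hβ)
  · rw [Set.ncard_neg, Set.ncard_image_of_injective _ w.injective]

open Pointwise in
theorem eq_of_isNeg_apply_a {J : Set ℕ} {w w' : V ≃ₗᵢ[ℝ] V} (hw : w ∈ S.WJ J)
    (hw' : w' ∈ S.WJ J) (hneg : ∀ i ∈ J ∩ Set.Icc 1 n, S.IsNeg (w (S.a i)))
    (hneg' : ∀ i ∈ J ∩ Set.Icc 1 n, S.IsNeg (w' (S.a i))) : w = w' := by
  suffices w'⁻¹ * w = 1 from (inv_mul_eq_one.mp this).symm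
  refine S.eq_one_of_isPos_apply_a (mul_mem (inv_mem hw') hw) fun i hi => ?_
  have hwi : w (S.a i) ∈ w' '' S.parabolicPosRoots J := by
    rw [S.image_parabolicPosRoots hw' hneg', Set.mem_neg]
    exact S.neg_apply_mem_parabolicPosRoots hw hneg (S.a_mem_parabolicPosRoots hi)
  obtain ⟨β, hβ, hβw⟩ := hwi
  rw [LinearIsometryEquiv.coe_mul, Function.comp_apply, ← hβw]
  simpa using hβ.1

theorem eq_prodW_of_isLongest {J : Set ℕ} {w : V ≃ₗᵢ[ℝ] V} (hw : S.IsLongest J w)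
    {l : List ℕ} (hl : ∀ k ∈ l, k ∈ J ∩ Set.Icc 1 n)
    (hneg : ∀ i ∈ J ∩ Set.Icc 1 n, S.IsNeg (S.prodW l (S.a i))) : w = S.prodW l :=
  S.eq_of_isNeg_apply_a hw.1 (S.prodW_mem_WJ hl)
    (fun _ hi => S.isNeg_apply_a_of_isLongest hw hi) hneg

def HasCartanMatrix (C : ℕ → ℕ → ℤ) : Prop :=
  ∀ i ∈ Finset.Icc 1 n, ∀ j ∈ Finset.Icc 1 n, 2 * ⟪S.a i, S.a j⟫ / ⟪S.a j, S.a j⟫ = C i j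

end RootSystemWithBase

def reflectCoords (C : ℕ → ℕ → ℤ) (n i : ℕ) (x : ℕ → ℤ) : ℕ → ℤ :=
  Function.update x i (x i - ∑ k ∈ Finset.Icc 1 n, x k * C k i)

def wordCoords (C : ℕ → ℕ → ℤ) (n : ℕ) (l : List ℕ) (x : ℕ → ℤ) : ℕ → ℤ :=
  l.foldr (reflectCoords C n) x

namespace RootSystemWithBase

variable {n : ℕ} (S : RootSystemWithBase V n) {C : ℕ → ℕ → ℤ}

theorem HasCartanMatrix.two_inner_div_eq_sum {S : RootSystemWithBase V n}
    (hC : S.HasCartanMatrix C) {i : ℕ} (hi : i ∈ Finset.Icc 1 n) (β : V) :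
    2 * ⟪β, S.a i⟫ / ⟪S.a i, S.a i⟫ = ∑ k ∈ Finset.Icc 1 n, S.coord k β * C k i := by
  conv_lhs => rw [← S.sum_coord_smul β]
  rw [sum_inner, Finset.mul_sum, Finset.sum_div]
  refine Finset.sum_congr rfl fun k hk => ?_
  rw [real_inner_smul_left, ← hC k hk i hi]
  ring

theorem HasCartanMatrix.coord_s {S : RootSystemWithBase V n} (hC : S.HasCartanMatrix C)
    {i : ℕ} (hi : i ∈ Finset.Icc 1 n) {β : V} {x : ℕ → ℤ}
    (hx : ∀ k ∈ Finset.Icc 1 n, S.coord k β = x k) :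
    ∀ k ∈ Finset.Icc 1 n, S.coord k (S.s i β) = reflectCoords C n i x k := by
  intro k hk
  rw [S.coord_s hi, hC.two_inner_div_eq_sum hi, Finset.sum_congr rfl fun k hk => by rw [hx k hk],
    reflectCoords, Function.update_apply, hx k hk]
  split_ifs with hki
  · subst hki
    push_cast
    ring
  · simp

theorem HasCartanMatrix.coord_prodW {S : RootSystemWithBase V n} (hC : S.HasCartanMatrix C)
    {l : List ℕ} (hl : ∀ k ∈ l, k ∈ Set.Icc 1 n) {β : V} {x : ℕ → ℤ}
    (hx : ∀ k ∈ Finset.Icc 1 n, S.coord k β = x k) :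
    ∀ k ∈ Finset.Icc 1 n, S.coord k (S.prodW l β) = wordCoords C n l x k := by
  induction l with
  | nil => exact hx
  | cons i l ih =>
    rw [List.forall_mem_cons] at hl
    rw [prodW_cons, LinearIsometryEquiv.coe_mul, Function.comp_apply]
    exact hC.coord_s (by simpa using hl.1) (ih hl.2)

theorem HasCartanMatrix.coord_prodW_a {S : RootSystemWithBase V n} (hC : S.HasCartanMatrix C)
    {l : List ℕ} (hl : ∀ k ∈ l, k ∈ Set.Icc 1 n) {j : ℕ} (hj : j ∈ Finset.Icc 1 n) (k : ℕ) :
    S.coord k (S.prodW l (S.a j)) = if k ∈ Finset.Icc 1 n then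
      (wordCoords C n l (Pi.single j 1) k : ℝ) else 0 := by
  split_ifs with hk
  · refine hC.coord_prodW hl (fun k _ => ?_) k hk
    rw [S.coord_a hj, Pi.single_apply]
    split_ifs <;> simp
  · exact S.coord_of_notMem hk _

theorem HasCartanMatrix.isPos_prodW_a {S : RootSystemWithBase V n} (hC : S.HasCartanMatrix C)
    {l : List ℕ} (hl : ∀ k ∈ l, k ∈ Set.Icc 1 n) {j : ℕ} (hj : j ∈ Finset.Icc 1 n)
    (hcoord : ∀ k ∈ Finset.Icc 1 n, 0 ≤ wordCoords C n l (Pi.single j 1) k) :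
    S.IsPos (S.prodW l (S.a j)) := by
  refine S.isPos_iff.mpr ⟨S.prodW_apply_mem_R hl (S.simple_mem j hj), fun k => ?_⟩
  rw [hC.coord_prodW_a hl hj]
  split_ifs with hk
  · exact_mod_cast hcoord k hk
  · exact le_rfl

theorem HasCartanMatrix.isNeg_prodW_a {S : RootSystemWithBase V n} (hC : S.HasCartanMatrix C)
    {l : List ℕ} (hl : ∀ k ∈ l, k ∈ Set.Icc 1 n) {j : ℕ} (hj : j ∈ Finset.Icc 1 n)
    (hcoord : ∀ k ∈ Finset.Icc 1 n, wordCoords C n l (Pi.single j 1) k ≤ 0) :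
    S.IsNeg (S.prodW l (S.a j)) := by
  refine S.isNeg_iff.mpr ⟨S.prodW_apply_mem_R hl (S.simple_mem j hj), fun k => ?_⟩
  rw [hC.coord_prodW_a hl hj]
  split_ifs with hk
  · exact_mod_cast hcoord k hk
  · exact le_rfl

end RootSystemWithBase

/-! ### Type `E_7` -/

section

-- `open scoped Classical` would otherwise decide `adjE` classically, and `decide` could not
-- evaluate `cartanE7`
local instance : DecidableRel adjE := fun _ _ => inferInstanceAs (Decidable (_ ∨ _))

def cartanE7 (i j : ℕ) : ℤ := if i = j then 2 else if adjE i j then -1 else 0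

end

theorem hasCartanMatrix_cartanE7 (S : RootSystemWithBase V 7)
    (hE : ∀ i ∈ Finset.Icc 1 7, ∀ j ∈ Finset.Icc 1 7,
      ⟪S.a i, S.a j⟫ = if i = j then 2 else if adjE i j then -1 else 0) :
    S.HasCartanMatrix cartanE7 := by
  intro i hi j hj
  rw [hE i hi j hj, hE j hj j hj, if_pos rfl, cartanE7]
  by_cases hij : i = j <;> by_cases hadj : adjE i j <;> simp [hij, hadj]

/-- A reduced word for the longest element `w_{0, S∖{α_1, α_i}}` of type `E_7`. -/
def parabolicLongestWordE7 : ℕ → List ℕ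
  | 1 => [2, 3, 4, 2, 3, 4, 5, 4, 2, 3, 4, 5, 6, 5, 4, 2, 3, 4, 5, 6, 7, 6, 5, 4, 2, 3, 4, 5, 6, 7]
  | 2 => [3, 4, 3, 5, 4, 3, 6, 5, 4, 3, 7, 6, 5, 4, 3]
  | 3 => [2, 4, 2, 5, 4, 2, 6, 5, 4, 2, 7, 6, 5, 4, 2]
  | 4 => [2, 3, 5, 6, 5, 7, 6, 5]
  | 5 => [2, 3, 4, 2, 3, 4, 6, 7, 6]
  | 6 => [2, 3, 4, 2, 3, 4, 5, 4, 2, 3, 4, 5, 7]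
  | _ => []

def v4WordE7 : List ℕ := [1, 3, 4, 5, 2, 4, 3, 6, 5, 4, 1, 2, 3, 7, 6, 5, 4]

theorem v4E7_eq_prodW (S : RootSystemWithBase V 7) : v4E7 S = S.prodW v4WordE7 := rfl

def invWordE7 (i : ℕ) : List ℕ :=
  (parabolicLongestWordE7 i ++ parabolicLongestWordE7 1 ++ v4WordE7).reverse

theorem parabolicLongestWordE7_mem :
    ∀ i ∈ Finset.Icc 1 6, ∀ k ∈ parabolicLongestWordE7 i, k ∈ Finset.Icc 2 7 ∧ k ≠ i := by
  decide

theorem invWordE7_mem : ∀ i ∈ Finset.Icc 1 6, ∀ k ∈ invWordE7 i, k ∈ Set.Icc 1 7 := by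
  simp only [Set.mem_Icc, ← Finset.mem_Icc]
  decide

set_option maxRecDepth 10000 in
theorem wordCoords_parabolicLongestWordE7_nonpos :
    ∀ i ∈ Finset.Icc 1 6, ∀ j ∈ Finset.Icc 2 7, j ≠ i → ∀ k ∈ Finset.Icc 1 7,
      wordCoords cartanE7 7 (parabolicLongestWordE7 i) (Pi.single j 1) k ≤ 0 := by
  decide

set_option maxRecDepth 10000 in
theorem wordCoords_invWordE7_nonneg :
    ∀ i ∈ Finset.Icc 1 6, ∀ j ∈ Finset.Icc 1 7, j ≠ i → ∀ k ∈ Finset.Icc 1 7,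
      0 ≤ wordCoords cartanE7 7 (invWordE7 i) (Pi.single j 1) k := by
  decide

set_option maxRecDepth 10000 in
theorem wordCoords_invWordE7_nonpos :
    ∀ i ∈ Finset.Icc 1 6, ∀ k ∈ Finset.Icc 1 7,
      wordCoords cartanE7 7 (invWordE7 i) (Pi.single i 1) k ≤ 0 := by
  decide

theorem eq_prodW_of_isLongest_E7 {S : RootSystemWithBase V 7} (hC : S.HasCartanMatrix cartanE7)
    {i : ℕ} (hi : i ∈ Finset.Icc 1 6) {w : V ≃ₗᵢ[ℝ] V}
    (hw : S.IsLongest (Set.Icc 1 7 \ {1, i}) w) : w = S.prodW (parabolicLongestWordE7 i) := by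
  have hJ : ∀ k, k ∈ (Set.Icc 1 7 \ {1, i}) ∩ Set.Icc 1 7 ↔ k ∈ Finset.Icc 2 7 ∧ k ≠ i := by
    intro k
    simp only [Set.mem_inter_iff, Set.mem_sdiff, Set.mem_Icc, Set.mem_insert_iff,
      Set.mem_singleton_iff, Finset.mem_Icc]
    omega
  have hl : ∀ k ∈ parabolicLongestWordE7 i, k ∈ (Set.Icc 1 7 \ {1, i}) ∩ Set.Icc 1 7 :=
    fun k hk => (hJ k).mpr (parabolicLongestWordE7_mem i hi k hk)
  refine S.eq_prodW_of_isLongest hw hl fun j hj => ?_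
  obtain ⟨hj, hji⟩ := (hJ j).mp hj
  exact hC.isNeg_prodW_a (fun k hk => (hl k hk).2) (Finset.Icc_subset_Icc_left one_le_two hj)
    (wordCoords_parabolicLongestWordE7_nonpos i hi j hj hji)

end PaperFormal

namespace PaperFormal

variable (V : Type*) [NormedAddCommGroup V] [InnerProductSpace ℝ V] [FiniteDimensional ℝ V]

variable {V}

/-- In type `E_7`, with `v_4` as above and
`w_i = w_{0, S∖{α_1, α_i}} w_{0, S∖{α_1}} v_4` for `i ≠ 7` (so `w_1 = v_4`): for every
`i ∈ {1, …, 6}`, `w_i⁻¹(α_j)` is a positive root for all `j ≠ i`, and `w_i⁻¹(α_i)` is a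
negative root. -/
theorem statement16 (S : RootSystemWithBase V 7)
    (hE : ∀ i ∈ Finset.Icc 1 7, ∀ j ∈ Finset.Icc 1 7,
      ⟪S.a i, S.a j⟫ = if i = j then 2 else if adjE i j then -1 else 0) :
    ∀ i ∈ Finset.Icc 1 6,
    ∀ w0a : V ≃ₗᵢ[ℝ] V, S.IsLongest (Set.Icc 1 7 \ {1}) w0a →
    ∀ w0b : V ≃ₗᵢ[ℝ] V, S.IsLongest (Set.Icc 1 7 \ {1, i}) w0b →
      (∀ j ∈ Finset.Icc 1 7, j ≠ i →
        S.IsPos ((w0b * w0a * v4E7 S)⁻¹ (S.a j))) ∧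
      S.IsNeg ((w0b * w0a * v4E7 S)⁻¹ (S.a i)) := by
  intro i hi w0a hw0a w0b hw0b
  have hC := hasCartanMatrix_cartanE7 S hE
  have hwa := eq_prodW_of_isLongest_E7 hC (i := 1) (by decide) (by rwa [Set.pair_eq_singleton])
  have hwb := eq_prodW_of_isLongest_E7 hC hi hw0b
  have hinv : (w0b * w0a * v4E7 S)⁻¹ = S.prodW (invWordE7 i) := by
    rw [hwa, hwb, v4E7_eq_prodW, ← S.prodW_append, ← S.prodW_append, S.prodW_inv, invWordE7]
  rw [hinv]
  exact ⟨fun j hj hji => hC.isPos_prodW_a (invWordE7_mem i hi) hj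
      (wordCoords_invWordE7_nonneg i hi j hj hji),
    hC.isNeg_prodW_a (invWordE7_mem i hi) (Finset.Icc_subset_Icc_right (by norm_num) hi)
      (wordCoords_invWordE7_nonpos i hi)⟩

end PaperFormal
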